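/- arXiv:1309.5753 — 2 statements merged into one kernel-verified Lean document; each statement's English description precedes it below -/
import Mathlib

section
/- Fix an integer k ≥ 2 and set n = n_k, and let S := ∑_{j=1}^{n−2} |c_j| + ∑_{j=n}^{2n−1} |c_j|. Then S < (2/3)·16^k. -/
/-!
The indices `1, …, n - 2` are exactly the blocks `2 ^ m - 3, …, 2 ^ (m + 1) - 4` with
`2 ≤ m < k`. Block `m` consists of `16 ^ m` followed by `16 ^ m` times a geometric progression
of ratio `|z_m| < 1/3`, so it weighs at most `(1 + 3/2) · 16 ^ m`, and summing over `m < k`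
gives at most `16 ^ k / 6`. The indices `n, …, 2n - 1` are block `k` without its endpoints, a sum
`16 ^ k (r + ⋯ + r ^ n)` with `r = |z_k|`, which is below `16 ^ k · r / (1 - r) < 16 ^ k / 2`.
-/

open Finset

lemma sum_Icc_norm_eq_mul_geom_sum {𝕜 : Type*} [NormedDivisionRing 𝕜] {c : ℕ → 𝕜} {C w : 𝕜}
    {a b : ℕ} (h : ∀ j ∈ Icc a b, c j = C * w ^ (b - j)) :
    ∑ j ∈ Icc a b, ‖c j‖ = ‖C‖ * ∑ i ∈ range (b + 1 - a), ‖w‖ ^ i := by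
  rw [sum_congr rfl fun j hj => by rw [h j hj, norm_mul, norm_pow], ← mul_sum,
    ← Ico_add_one_right_eq_Icc, sum_Ico_reflect (‖w‖ ^ ·) a le_rfl, Nat.sub_self,
    Nat.Ico_zero_eq_range]

lemma geom_sum_le_inv_one_sub {r : ℝ} (h0 : 0 ≤ r) (h1 : r < 1) (N : ℕ) :
    ∑ i ∈ range N, r ^ i ≤ (1 - r)⁻¹ := by
  have := geom_sum_Ico_le_of_lt_one (m := 0) (n := N) h0 h1
  rwa [Nat.Ico_zero_eq_range, pow_zero, one_div] at this

lemma four_le_two_pow {m : ℕ} (hm : 2 ≤ m) : 4 ≤ 2 ^ m :=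
  Nat.pow_le_pow_right two_pos hm

section Blocks

variable {z c : ℕ → ℂ} (hz : ∀ k, 2 ≤ k → ‖z k‖ < 1 / 3)
  (hcj : ∀ k, 2 ≤ k → ∀ j, 2 ^ k - 2 ≤ j → j ≤ 2 ^ (k + 1) - 4 →
    c j = 16 ^ k * z k ^ (2 ^ (k + 1) - 4 - j))
include hz hcj

lemma sum_norm_geometric_block_le {m : ℕ} (hm : 2 ≤ m) :
    ∑ j ∈ Icc (2 ^ m - 2) (2 ^ (m + 1) - 4), ‖c j‖ ≤ 3 / 2 * 16 ^ m := by
  rw [sum_Icc_norm_eq_mul_geom_sum fun j hj => hcj m hm j (mem_Icc.1 hj).1 (mem_Icc.1 hj).2]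
  have hr := hz m hm
  have hgeom : ∑ i ∈ range (2 ^ (m + 1) - 4 + 1 - (2 ^ m - 2)), ‖z m‖ ^ i ≤ 3 / 2 :=
    (geom_sum_le_inv_one_sub (norm_nonneg _) (by linarith) _).trans <| by
      rw [inv_le_comm₀ (by linarith) (by norm_num)]; linarith
  rw [norm_pow, Complex.norm_ofNat, mul_comm]
  gcongr

lemma sum_norm_tail_block_lt {k : ℕ} (hk : 2 ≤ k) :
    ∑ j ∈ Icc (2 ^ k - 2) (2 ^ (k + 1) - 5), ‖c j‖ < 16 ^ k / 2 := by
  have h4 := four_le_two_pow hk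
  have h2 : 2 ^ (k + 1) = 2 * 2 ^ k := pow_succ' 2 k
  have hblock : ∀ j ∈ Icc (2 ^ k - 2) (2 ^ (k + 1) - 5),
      c j = (16 ^ k * z k) * z k ^ (2 ^ (k + 1) - 5 - j) := by
    intro j hj
    obtain ⟨hj1, hj2⟩ := mem_Icc.1 hj
    rw [hcj k hk j hj1 (by omega), mul_assoc, ← pow_succ']
    congr 2
    omega
  rw [sum_Icc_norm_eq_mul_geom_sum hblock, norm_mul, norm_pow, Complex.norm_ofNat]
  set r := ‖z k‖
  have hr := hz k hk
  have hr0 : 0 ≤ r := norm_nonneg _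
  have hgeom : r * ∑ i ∈ range (2 ^ (k + 1) - 5 + 1 - (2 ^ k - 2)), r ^ i < 1 / 2 :=
    calc _ ≤ r * (1 - r)⁻¹ :=
          mul_le_mul_of_nonneg_left (geom_sum_le_inv_one_sub hr0 (by linarith) _) hr0
      _ < 1 / 2 := by
          rw [← div_eq_mul_inv, div_lt_iff₀ (by linarith)]; linarith
  rw [mul_assoc]
  linarith [mul_lt_mul_of_pos_left hgeom (by positivity : (0 : ℝ) < 16 ^ k)]

variable (hck : ∀ k, 2 ≤ k → c (2 ^ k - 3) = 16 ^ k)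
include hck

lemma sum_norm_block_le {m : ℕ} (hm : 2 ≤ m) :
    ∑ j ∈ Ioc (2 ^ m - 4) (2 ^ (m + 1) - 4), ‖c j‖ ≤ 5 / 2 * 16 ^ m := by
  have h4 := four_le_two_pow hm
  have h2 : 2 ^ (m + 1) = 2 * 2 ^ m := pow_succ' 2 m
  have hsplit : Ioc (2 ^ m - 4) (2 ^ (m + 1) - 4) =
      insert (2 ^ m - 3) (Icc (2 ^ m - 2) (2 ^ (m + 1) - 4)) := by
    ext j
    simp only [mem_Ioc, mem_insert, mem_Icc]
    omega
  rw [hsplit, sum_insert (by simp only [mem_Icc]; omega), hck m hm, norm_pow,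
    Complex.norm_ofNat]
  linarith [sum_norm_geometric_block_le hz hcj hm]

lemma sum_norm_initial_blocks_le {k : ℕ} (hk : 2 ≤ k) :
    ∑ j ∈ Ioc 0 (2 ^ k - 4), ‖c j‖ ≤ 16 ^ k / 6 := by
  induction k, hk using Nat.le_induction with
  | base => norm_num
  | succ m hm ih =>
    have h4 := four_le_two_pow hm
    have h2 : 2 ^ (m + 1) = 2 * 2 ^ m := pow_succ' 2 m
    rw [← sum_Ioc_consecutive _ (Nat.zero_le (2 ^ m - 4)) (by omega), pow_succ (16 : ℝ)]
    linarith [sum_norm_block_le hz hcj hck hm]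

end Blocks

theorem stmt_12_general (z c : ℕ → ℂ)
    (hz : ∀ k, 2 ≤ k → 0 < ‖z k‖ ∧ ‖z k‖ < 1 / 3)
    (hck : ∀ k, 2 ≤ k → c (2 ^ k - 3) = 16 ^ k)
    (hcj : ∀ k, 2 ≤ k → ∀ j, 2 ^ k - 2 ≤ j → j ≤ 2 ^ (k + 1) - 4 →
      c j = 16 ^ k * z k ^ (2 ^ (k + 1) - 4 - j))
    (k n : ℕ) (hk : 2 ≤ k) (hn : n = 2 ^ k - 2)
    (S : ℝ)
    (hS : S = (∑ j ∈ Finset.Icc 1 (n - 2), ‖c j‖) +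
      ∑ j ∈ Finset.Icc n (2 * n - 1), ‖c j‖) :
    S < 2 / 3 * 16 ^ k := by
  have hz' : ∀ k, 2 ≤ k → ‖z k‖ < 1 / 3 := fun k hk => (hz k hk).2
  have h4 := four_le_two_pow hk
  have h2 : 2 ^ (k + 1) = 2 * 2 ^ k := pow_succ' 2 k
  have hlow : n - 2 = 2 ^ k - 4 := by omega
  have hhigh : 2 * n - 1 = 2 ^ (k + 1) - 5 := by omega
  rw [hS, hlow, hhigh, hn,
    show Icc 1 (2 ^ k - 4) = Ioc 0 (2 ^ k - 4) from Icc_add_one_left_eq_Ioc 0 _]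
  linarith [sum_norm_initial_blocks_le hz' hcj hck hk, sum_norm_tail_block_lt hz' hcj hk]

/-- For fixed `k ≥ 2`, `n = n_k = 2^k − 2`, and
`S := ∑_{j=1}^{n−2} |c_j| + ∑_{j=n}^{2n−1} |c_j|`, we have `S < (2/3)·16^k`. -/
theorem stmt_12 (z c : ℕ → ℂ)
    (hz : ∀ k, 2 ≤ k → 0 < ‖z k‖ ∧ ‖z k‖ < 1 / 3)
    (hc0 : c 0 = 1)
    (hck : ∀ k, 2 ≤ k → c (2 ^ k - 3) = 16 ^ k)
    (hcj : ∀ k, 2 ≤ k → ∀ j, 2 ^ k - 2 ≤ j → j ≤ 2 ^ (k + 1) - 4 →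
      c j = 16 ^ k * z k ^ (2 ^ (k + 1) - 4 - j))
    (k n : ℕ) (hk : 2 ≤ k) (hn : n = 2 ^ k - 2)
    (S : ℝ)
    (hS : S = (∑ j ∈ Finset.Icc 1 (n - 2), ‖c j‖) +
      ∑ j ∈ Finset.Icc n (2 * n - 1), ‖c j‖) :
    S < 2 / 3 * 16 ^ k :=
  stmt_12_general z c hz hck hcj k n hk hn S hS
end

section
/- Fix an integer k ≥ 2, set n = n_k, and let S := ∑_{j=1}^{n−2} |c_j| + ∑_{j=n}^{2n−1} |c_j|. If S ≤ 16^k, then every eigenvalue λ of the Hermitian matrix B_n B_nᴴ satisfies (16^k − S)² ≤ λ ≤ (16^k + S)²; equivalently, every singular value σ of B_n satisfies 16^k − S ≤ σ ≤ 16^k + S. -/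
/-!
Index rows and columns of `B_n` from `0`, so that `B i j = c (n + i + 1 - j)`. The entries
`c (n - 1) = c (2n) = 16 ^ k` sit at column `i + 2` of row `i < n - 1` and at column `0` of the last
row: one per row, in distinct columns. Hence `B = 16 ^ k • P + E` with `P Pᴴ = 1`, while every other
entry is some `c t` with `t ∈ [1, n - 2] ∪ [n, 2n - 1]`, each `t` at most once in a row or column of
`E`. By the Schur test `‖Eᴴ v‖ ≤ S ‖v‖`. For a unit eigenvector `v` of `B Bᴴ` the eigenvalue is
`‖Bᴴ v‖ ^ 2`, and `Bᴴ v = 16 ^ k • Pᴴ v + Eᴴ v` with `‖Pᴴ v‖ = 1`, so the triangle inequality gives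
`16 ^ k - S ≤ ‖Bᴴ v‖ ≤ 16 ^ k + S`.
-/

open Finset Matrix WithLp

namespace Matrix

variable {𝕜 m n : Type*} [RCLike 𝕜] [Fintype n]

lemma submatrix_one_mul_conjTranspose [DecidableEq m] [DecidableEq n] {f : m → n}
    (hf : Function.Injective f) :
    (1 : Matrix n n 𝕜).submatrix f id * ((1 : Matrix n n 𝕜).submatrix f id)ᴴ = 1 := by
  rw [conjTranspose_submatrix, conjTranspose_one, ← submatrix_mul _ _ _ _ _ Function.bijective_id,
    one_mul, submatrix_one _ hf]

variable [Fintype m]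

lemma norm_toLp_conjTranspose_mulVec_sq (B : Matrix m n 𝕜) (v : m → 𝕜) :
    ‖toLp 2 (Bᴴ *ᵥ v)‖ ^ 2 = RCLike.re (star v ⬝ᵥ (B * Bᴴ) *ᵥ v) := by
  rw [← mulVec_mulVec, dotProduct_mulVec, ← conjTranspose_conjTranspose B, ← star_mulVec,
    conjTranspose_conjTranspose, dotProduct_comm, ← EuclideanSpace.inner_toLp_toLp,
    inner_self_eq_norm_sq]

lemma norm_toLp_conjTranspose_mulVec_of_mul_conjTranspose_eq_one [DecidableEq m]
    {P : Matrix m n 𝕜} (hP : P * Pᴴ = 1) (v : m → 𝕜) :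
    ‖toLp 2 (Pᴴ *ᵥ v)‖ = ‖toLp 2 v‖ := by
  have h := norm_toLp_conjTranspose_mulVec_sq (1 : Matrix m m 𝕜) v
  rw [conjTranspose_one, one_mulVec, one_mul, ← hP, ← norm_toLp_conjTranspose_mulVec_sq] at h
  exact (sq_eq_sq₀ (norm_nonneg _) (norm_nonneg _)).1 h.symm

lemma IsHermitian.eigenvalues_mul_conjTranspose_eq_norm_sq [DecidableEq m] {B : Matrix m n 𝕜}
    (hH : (B * Bᴴ).IsHermitian) (i : m) :
    hH.eigenvalues i = ‖toLp 2 (Bᴴ *ᵥ hH.eigenvectorBasis i)‖ ^ 2 := by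
  rw [hH.eigenvalues_eq, norm_toLp_conjTranspose_mulVec_sq]

/-- Schur test. -/
lemma norm_toLp_mulVec_sq_le (A : Matrix m n 𝕜) {R C : ℝ} (hR : 0 ≤ R)
    (hrow : ∀ i, ∑ j, ‖A i j‖ ≤ R) (hcol : ∀ j, ∑ i, ‖A i j‖ ≤ C) (x : n → 𝕜) :
    ‖toLp 2 (A *ᵥ x)‖ ^ 2 ≤ R * C * ‖toLp 2 x‖ ^ 2 := by
  have hentry (i : m) : ‖(A *ᵥ x) i‖ ^ 2 ≤ R * ∑ j, ‖A i j‖ * ‖x j‖ ^ 2 :=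
    calc ‖(A *ᵥ x) i‖ ^ 2 ≤ (∑ j, ‖A i j‖ * ‖x j‖) ^ 2 := by
          gcongr
          exact (norm_sum_le _ _).trans_eq (by simp_rw [norm_mul])
      _ ≤ (∑ j, ‖A i j‖) * ∑ j, ‖A i j‖ * ‖x j‖ ^ 2 :=
          sum_sq_le_sum_mul_sum_of_sq_le_mul _ (fun _ _ => norm_nonneg _)
            (fun _ _ => by positivity) (fun _ _ => (by ring : _ = _).le)
      _ ≤ R * ∑ j, ‖A i j‖ * ‖x j‖ ^ 2 := by gcongr; exact hrow i
  simp only [EuclideanSpace.norm_sq_eq]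
  calc ∑ i, ‖(A *ᵥ x) i‖ ^ 2 ≤ ∑ i, R * ∑ j, ‖A i j‖ * ‖x j‖ ^ 2 :=
        sum_le_sum fun i _ => hentry i
    _ = R * ∑ j, (∑ i, ‖A i j‖) * ‖x j‖ ^ 2 := by
        rw [← mul_sum, sum_comm]; simp_rw [sum_mul]
    _ ≤ R * ∑ j, C * ‖x j‖ ^ 2 := by gcongr with j; exact hcol j
    _ = R * C * ∑ j, ‖x j‖ ^ 2 := by rw [← mul_sum, mul_assoc]

lemma norm_toLp_conjTranspose_mulVec_mem_Icc [DecidableEq m] {B P E : Matrix m n 𝕜} {a : 𝕜}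
    {S : ℝ} (hB : B = a • P + E) (hP : P * Pᴴ = 1) (hS : 0 ≤ S)
    (hrow : ∀ i, ∑ j, ‖E i j‖ ≤ S) (hcol : ∀ j, ∑ i, ‖E i j‖ ≤ S) (v : m → 𝕜) :
    ‖toLp 2 (Bᴴ *ᵥ v)‖ ∈ Set.Icc ((‖a‖ - S) * ‖toLp 2 v‖) ((‖a‖ + S) * ‖toLp 2 v‖) := by
  have hmain : ‖toLp 2 (star a • Pᴴ *ᵥ v)‖ = ‖a‖ * ‖toLp 2 v‖ := by
    rw [toLp_smul, norm_smul, norm_star,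
      norm_toLp_conjTranspose_mulVec_of_mul_conjTranspose_eq_one hP]
  have herr : ‖toLp 2 (Eᴴ *ᵥ v)‖ ≤ S * ‖toLp 2 v‖ := by
    have := Eᴴ.norm_toLp_mulVec_sq_le hS (fun j => by simpa using hcol j)
      (fun i => by simpa using hrow i) v
    exact (pow_le_pow_iff_left₀ (norm_nonneg _) (by positivity) two_ne_zero).1
      (this.trans_eq (by ring))
  have hsplit : toLp 2 (Bᴴ *ᵥ v) = toLp 2 (star a • Pᴴ *ᵥ v) + toLp 2 (Eᴴ *ᵥ v) := by
    rw [hB, conjTranspose_add, conjTranspose_smul, add_mulVec, smul_mulVec, toLp_add]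
  rw [hsplit]
  constructor
  · have := norm_sub_norm_le (toLp 2 (star a • Pᴴ *ᵥ v)) (-toLp 2 (Eᴴ *ᵥ v))
    rw [sub_neg_eq_add, norm_neg] at this
    linarith
  · have := norm_add_le (toLp 2 (star a • Pᴴ *ᵥ v)) (toLp 2 (Eᴴ *ᵥ v))
    linarith

theorem IsHermitian.eigenvalues_mul_conjTranspose_mem_Icc [DecidableEq m]
    {B P E : Matrix m n 𝕜} {a : 𝕜} {S : ℝ} (hB : B = a • P + E) (hP : P * Pᴴ = 1)
    (hrow : ∀ i, ∑ j, ‖E i j‖ ≤ S) (hcol : ∀ j, ∑ i, ‖E i j‖ ≤ S) (hSa : S ≤ ‖a‖)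
    (hH : (B * Bᴴ).IsHermitian) (i : m) :
    hH.eigenvalues i ∈ Set.Icc ((‖a‖ - S) ^ 2) ((‖a‖ + S) ^ 2) := by
  have hS : 0 ≤ S := (sum_nonneg fun j _ => norm_nonneg (E i j)).trans (hrow i)
  have hunit : ‖toLp 2 (hH.eigenvectorBasis i).ofLp‖ = 1 := hH.eigenvectorBasis.orthonormal.1 i
  obtain ⟨hlow, hup⟩ := norm_toLp_conjTranspose_mulVec_mem_Icc hB hP hS hrow hcol
    (hH.eigenvectorBasis i).ofLp
  rw [hunit, mul_one] at hlow hup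
  rw [hH.eigenvalues_mul_conjTranspose_eq_norm_sq]
  exact ⟨pow_le_pow_left₀ (by linarith) hlow 2, pow_le_pow_left₀ (norm_nonneg _) hup 2⟩

end Matrix

lemma sum_norm_ite_mem_le {ι β E : Type*} [Fintype ι] [DecidableEq β] [SeminormedAddCommGroup E]
    {d : ι → β} (hd : Function.Injective d) (c : β → E) (T : Finset β) :
    ∑ x, ‖if d x ∈ T then c (d x) else 0‖ ≤ ∑ t ∈ T, ‖c t‖ := by
  simp_rw [apply_ite norm, norm_zero, ← sum_filter]
  rw [← sum_image (f := fun t => ‖c t‖) hd.injOn]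
  exact sum_le_sum_of_subset_of_nonneg (by simp [subset_iff]) fun _ _ _ => norm_nonneg _

def dominantCol (n : ℕ) (i : Fin n) : Fin (n + 1) :=
  if h : (i : ℕ) + 2 ≤ n then ⟨i + 2, by omega⟩ else 0

/-- `[1, 2n] \ {n - 1, 2n}`: the indices `t` of the entries `c t` of `B_n` outside the dominant
columns. -/
def offDominant (n : ℕ) : Finset ℕ := Icc 1 (n - 2) ∪ Icc n (2 * n - 1)

def offDominantPart {R : Type*} [Zero R] (n : ℕ) (c : ℕ → R) : Matrix (Fin n) (Fin (n + 1)) R :=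
  of fun i j => if n + i + 1 - j ∈ offDominant n then c (n + i + 1 - j) else 0

section

variable {n : ℕ}

lemma val_dominantCol (i : Fin n) :
    (dominantCol n i : ℕ) = if (i : ℕ) + 2 ≤ n then (i : ℕ) + 2 else 0 := by
  unfold dominantCol; split_ifs <;> rfl

lemma dominantCol_injective : Function.Injective (dominantCol n) := by
  intro i i' h
  have := congrArg Fin.val h
  rw [val_dominantCol, val_dominantCol] at this
  ext; split_ifs at this <;> omega

lemma dominantCol_eq_iff (hn : 2 ≤ n) (i : Fin n) (j : Fin (n + 1)) :
    dominantCol n i = j ↔ n + i + 1 - j ∉ offDominant n := by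
  have := i.isLt; have := j.isLt
  rw [Fin.ext_iff, val_dominantCol]
  simp only [offDominant, mem_union, mem_Icc]
  split_ifs <;> omega

lemma toeplitz_eq_smul_add {R : Type*} [Semiring R] (hn : 2 ≤ n) {c : ℕ → R} {a : R}
    (hc₁ : c (n - 1) = a) (hc₂ : c (2 * n) = a) :
    of (fun (i : Fin n) (j : Fin (n + 1)) => c (n + i + 1 - j)) =
      a • (1 : Matrix (Fin (n + 1)) (Fin (n + 1)) R).submatrix (dominantCol n) id +
        offDominantPart n c := by
  ext i j
  simp only [offDominantPart, of_apply, Matrix.add_apply, Matrix.smul_apply, submatrix_apply, id,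
    one_apply, smul_eq_mul]
  by_cases h : dominantCol n i = j
  · have hd : n + i + 1 - j = n - 1 ∨ n + i + 1 - j = 2 * n := by
      have := i.isLt; have := congrArg Fin.val h; rw [val_dominantCol] at this
      split_ifs at this <;> omega
    rw [if_pos h, if_neg ((dominantCol_eq_iff hn i j).1 h), mul_one, add_zero]
    rcases hd with hd | hd <;> rw [hd] <;> assumption
  · rw [if_neg h, if_pos (not_not.1 (mt (dominantCol_eq_iff hn i j).2 h)), mul_zero, zero_add]

variable {E : Type*} [SeminormedAddCommGroup E] (c : ℕ → E)

lemma sum_norm_offDominantPart_row_le (i : Fin n) :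
    ∑ j, ‖offDominantPart n c i j‖ ≤ ∑ t ∈ offDominant n, ‖c t‖ :=
  sum_norm_ite_mem_le (d := fun j : Fin (n + 1) => n + i + 1 - j)
    (fun j j' h => by have := j.isLt; have := j'.isLt; simp only at h; omega) c _

lemma sum_norm_offDominantPart_col_le (j : Fin (n + 1)) :
    ∑ i, ‖offDominantPart n c i j‖ ≤ ∑ t ∈ offDominant n, ‖c t‖ :=
  sum_norm_ite_mem_le (d := fun i : Fin n => n + i + 1 - j)
    (fun i i' h => by have := j.isLt; simp only at h; omega) c _

end

theorem stmt_15_general (z c : ℕ → ℂ)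
    (hck : ∀ k, 2 ≤ k → c (2 ^ k - 3) = 16 ^ k)
    (hcj : ∀ k, 2 ≤ k → ∀ j, 2 ^ k - 2 ≤ j → j ≤ 2 ^ (k + 1) - 4 →
      c j = 16 ^ k * z k ^ (2 ^ (k + 1) - 4 - j))
    (k n : ℕ) (hk : 2 ≤ k) (hn : n = 2 ^ k - 2)
    (S : ℝ)
    (hS : S = (∑ j ∈ Finset.Icc 1 (n - 2), ‖c j‖) +
      ∑ j ∈ Finset.Icc n (2 * n - 1), ‖c j‖)
    (hSle : S ≤ 16 ^ k)
    (B : Matrix (Fin n) (Fin (n + 1)) ℂ)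
    (hB : ∀ i j, B i j = c (n + (i : ℕ) + 1 - (j : ℕ)))
    (hH : (B * B.conjTranspose).IsHermitian) :
    ∀ i : Fin n, ((16 : ℝ) ^ k - S) ^ 2 ≤ hH.eigenvalues i ∧
      hH.eigenvalues i ≤ ((16 : ℝ) ^ k + S) ^ 2 := by
  have h4 : 2 ^ 2 ≤ 2 ^ k := Nat.pow_le_pow_right two_pos hk
  have hpow : 2 ^ (k + 1) = 2 * 2 ^ k := pow_succ' 2 k
  have hn2 : 2 ≤ n := by omega
  have hc₁ : c (n - 1) = 16 ^ k := by rw [show n - 1 = 2 ^ k - 3 by omega]; exact hck k hk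
  have hc₂ : c (2 * n) = 16 ^ k := by
    rw [hcj k hk (2 * n) (by omega) (by omega), show 2 ^ (k + 1) - 4 - 2 * n = 0 by omega,
      pow_zero, mul_one]
  have hST : S = ∑ t ∈ offDominant n, ‖c t‖ := by
    rw [hS, offDominant, sum_union (disjoint_left.2 fun t h₁ h₂ => by simp at h₁ h₂; omega)]
  have hBeq : B = _ := (Matrix.ext hB).trans (toeplitz_eq_smul_add hn2 hc₁ hc₂)
  intro i
  simpa using hH.eigenvalues_mul_conjTranspose_mem_Icc hBeq
    (submatrix_one_mul_conjTranspose dominantCol_injective)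
    (hST ▸ sum_norm_offDominantPart_row_le c) (hST ▸ sum_norm_offDominantPart_col_le c)
    (by simpa using hSle) i

/-- For fixed `k ≥ 2`, `n = n_k = 2^k − 2`, and
`S := ∑_{j=1}^{n−2} |c_j| + ∑_{j=n}^{2n−1} |c_j|`, if `S ≤ 16^k` then every eigenvalue `λ`
of the Hermitian matrix `B_n B_nᴴ` satisfies `(16^k − S)² ≤ λ ≤ (16^k + S)²`; equivalently
every singular value `σ` of `B_n` satisfies `16^k − S ≤ σ ≤ 16^k + S`. -/
theorem stmt_15 (z c : ℕ → ℂ)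
    (hz : ∀ k, 2 ≤ k → 0 < ‖z k‖ ∧ ‖z k‖ < 1 / 3)
    (hc0 : c 0 = 1)
    (hck : ∀ k, 2 ≤ k → c (2 ^ k - 3) = 16 ^ k)
    (hcj : ∀ k, 2 ≤ k → ∀ j, 2 ^ k - 2 ≤ j → j ≤ 2 ^ (k + 1) - 4 →
      c j = 16 ^ k * z k ^ (2 ^ (k + 1) - 4 - j))
    (k n : ℕ) (hk : 2 ≤ k) (hn : n = 2 ^ k - 2)
    (S : ℝ)
    (hS : S = (∑ j ∈ Finset.Icc 1 (n - 2), ‖c j‖) +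
      ∑ j ∈ Finset.Icc n (2 * n - 1), ‖c j‖)
    (hSle : S ≤ 16 ^ k)
    (B : Matrix (Fin n) (Fin (n + 1)) ℂ)
    (hB : ∀ i j, B i j = c (n + (i : ℕ) + 1 - (j : ℕ)))
    (hH : (B * B.conjTranspose).IsHermitian) :
    ∀ i : Fin n, ((16 : ℝ) ^ k - S) ^ 2 ≤ hH.eigenvalues i ∧
      hH.eigenvalues i ≤ ((16 : ℝ) ^ k + S) ^ 2 :=
  stmt_15_general z c hck hcj k n hk hn S hS hSle B hB hH
end
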